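/- arXiv:1711.01501 — 5 statements merged into one kernel-verified Lean document; each statement's English description precedes it below -/
import Mathlib

section
/- Let f be a normalized (f(∅)=0), monotone decreasing, α-supermodular multiset function with constant α ∈ (0,1], i.e., for all multisets A ⊆ B and elements u, f(A) - f(A ∪ {u}) ≥ α·[f(B) - f(B ∪ {u})]. Let G_ℓ be the greedy solution after ℓ iterations (each step adds the element minimizing f), and D* an optimal multiset of cardinality at most k. Then f(G_ℓ) ≤ (1 - e^{-αℓ/k}) f(D*). -/
/-- Greedy near-optimality for α-supermodular multiset functions (constant α). -/
theorem greedy_alpha_supermodular_constant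
    {E : Type*} [Fintype E] [Nonempty E]
    (f : Multiset E → ℝ) (α : ℝ) (k ℓ : ℕ) (hk : 0 < k)
    (hα_pos : 0 < α) (hα_le : α ≤ 1)
    (hnorm : f 0 = 0)
    (hmono : ∀ S T : Multiset E, S ≤ T → f T ≤ f S)
    (hsuper : ∀ (S T : Multiset E) (u : E), S ≤ T →
      f S - f (u ::ₘ S) ≥ α * (f T - f (u ::ₘ T)))
    (G : ℕ → Multiset E)
    (hG0 : G 0 = 0)
    (hGstep : ∀ h : ℕ, ∃ e : E, G (h + 1) = e ::ₘ G h ∧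
      ∀ u : E, f (e ::ₘ G h) ≤ f (u ::ₘ G h))
    (Dstar : Multiset E)
    (hDcard : Multiset.card Dstar ≤ k)
    (hDopt : ∀ D : Multiset E, Multiset.card D ≤ k → f Dstar ≤ f D) :
    f (G ℓ) ≤ (1 - Real.exp (-(α * ℓ / k))) * f Dstar := by
  have hk' : (0:ℝ) < k := by exact_mod_cast hk
  -- key telescoping lemma
  have key : ∀ (S D : Multiset E),
      α * (f S - f (S + D)) ≤ (D.map (fun u => f S - f (u ::ₘ S))).sum := by
    intro S D
    induction D using Multiset.induction with
    | empty => simp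
    | cons a D ih =>
      rw [Multiset.map_cons, Multiset.sum_cons, Multiset.add_cons]
      have h1 := hsuper S (S + D) a (Multiset.le_add_right S D)
      nlinarith
  set r : ℝ := 1 - α / k with hr
  have hαk1 : α / k ≤ 1 := by
    rw [div_le_one hk']
    calc α ≤ 1 := hα_le
    _ ≤ (k:ℝ) := by exact_mod_cast hk
  have hr0 : 0 ≤ r := by simp [hr]; linarith
  have hfD : f Dstar ≤ 0 := by
    have := hmono 0 Dstar (Multiset.zero_le _)
    simpa [hnorm] using this
  have main : ∀ h : ℕ, f (G h) - f Dstar ≤ r ^ h * (0 - f Dstar) := by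
    intro h
    induction h with
    | zero => simp [hG0, hnorm]
    | succ h ih =>
      obtain ⟨e, hGe, hemin⟩ := hGstep h
      have hd0 : 0 ≤ f (G h) - f (G (h+1)) := by
        rw [hGe]
        have := hmono (G h) (e ::ₘ G h) (Multiset.le_cons_self _ _)
        linarith
      have hsum : α * (f (G h) - f (G h + Dstar)) ≤
          (Dstar.map (fun u => f (G h) - f (u ::ₘ G h))).sum := key _ _
      have hbound : (Dstar.map (fun u => f (G h) - f (u ::ₘ G h))).sum ≤
          (Multiset.card Dstar : ℝ) * (f (G h) - f (G (h+1))) := by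
        have := Multiset.sum_le_card_nsmul
          (Dstar.map (fun u => f (G h) - f (u ::ₘ G h)))
          (f (G h) - f (G (h+1))) ?_
        · simpa [nsmul_eq_mul] using this
        · intro x hx
          obtain ⟨u, _, rfl⟩ := Multiset.mem_map.mp hx
          have := hemin u
          rw [hGe]
          linarith
      have hcard : (Multiset.card Dstar : ℝ) * (f (G h) - f (G (h+1))) ≤
          (k:ℝ) * (f (G h) - f (G (h+1))) := by
        apply mul_le_mul_of_nonneg_right _ hd0
        exact_mod_cast hDcard
      have hDle : f (G h + Dstar) ≤ f Dstar :=
        hmono Dstar (G h + Dstar) (Multiset.le_add_left _ _)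
      have hstep : α * (f (G h) - f Dstar) ≤ (k:ℝ) * (f (G h) - f (G (h+1))) := by
        have : α * (f (G h) - f Dstar) ≤ α * (f (G h) - f (G h + Dstar)) := by
          apply mul_le_mul_of_nonneg_left _ (le_of_lt hα_pos)
          linarith
        linarith
      have h2 : f (G (h+1)) - f Dstar ≤ r * (f (G h) - f Dstar) := by
        have hk0 : (k:ℝ) ≠ 0 := ne_of_gt hk'
        have h3 : α / k * (f (G h) - f Dstar) ≤ f (G h) - f (G (h+1)) := by
          rw [div_mul_eq_mul_div, div_le_iff₀ hk']
          nlinarith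
        have h4 : r * (f (G h) - f Dstar)
            = (f (G h) - f Dstar) - α / k * (f (G h) - f Dstar) := by
          rw [hr]; ring
        rw [h4]
        linarith
      calc f (G (h+1)) - f Dstar ≤ r * (f (G h) - f Dstar) := h2
        _ ≤ r * (r ^ h * (0 - f Dstar)) := mul_le_mul_of_nonneg_left ih hr0
        _ = r ^ (h+1) * (0 - f Dstar) := by ring
  have hrexp : r ≤ Real.exp (-(α / k)) := by
    have := Real.add_one_le_exp (-(α / k))
    linarith [this]
  have hpow : r ^ ℓ ≤ Real.exp (-(α * ℓ / k)) := by
    calc r ^ ℓ ≤ Real.exp (-(α / k)) ^ ℓ := pow_le_pow_left₀ hr0 hrexp ℓ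
      _ = Real.exp ((ℓ:ℝ) * (-(α / k))) := (Real.exp_nat_mul _ ℓ).symm
      _ = Real.exp (-(α * ℓ / k)) := by ring_nf
  have hfinal := main ℓ
  have : r ^ ℓ * (0 - f Dstar) ≤ Real.exp (-(α * ℓ / k)) * (0 - f Dstar) := by
    apply mul_le_mul_of_nonneg_right hpow
    linarith
  nlinarith [this, hfinal]
end

section
/- Let f be a normalized, monotone decreasing, ε-supermodular multiset function with constant ε ≥ 0, i.e., for all multisets A ⊆ B and elements u, f(A) - f(A ∪ {u}) ≥ f(B) - f(B ∪ {u}) - ε. Let G_ℓ be the greedy solution after ℓ iterations and D* the optimal multiset with |D*| ≤ k. Then f(G_ℓ) ≤ (1 - e^{-ℓ/k})·(f(D*) + kε). -/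
/-- Greedy near-optimality for ε-supermodular multiset functions (constant ε). -/
theorem greedy_epsilon_supermodular_constant
    {E : Type*} [Fintype E] [Nonempty E]
    (f : Multiset E → ℝ) (ε : ℝ) (k ℓ : ℕ) (hk : 0 < k)
    (hε : 0 ≤ ε)
    (hnorm : f 0 = 0)
    (hmono : ∀ S T : Multiset E, S ≤ T → f T ≤ f S)
    (hsuper : ∀ (S T : Multiset E) (u : E), S ≤ T →
      f S - f (u ::ₘ S) ≥ f T - f (u ::ₘ T) - ε)
    (G : ℕ → Multiset E)
    (hG0 : G 0 = 0)
    (hGstep : ∀ h : ℕ, ∃ e : E, G (h + 1) = e ::ₘ G h ∧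
      ∀ u : E, f (e ::ₘ G h) ≤ f (u ::ₘ G h))
    (Dstar : Multiset E)
    (hDcard : Multiset.card Dstar ≤ k)
    (hDopt : ∀ D : Multiset E, Multiset.card D ≤ k → f Dstar ≤ f D) :
    f (G ℓ) ≤ (1 - Real.exp (-(ℓ / k : ℝ))) * (f Dstar + k * ε) := by
  have hkpos : (0:ℝ) < (k:ℝ) := by exact_mod_cast hk
  have hk1 : (1:ℝ) ≤ (k:ℝ) := by exact_mod_cast hk
  obtain ⟨C, hC⟩ : ∃ C : ℝ, C = f Dstar + k * ε := ⟨_, rfl⟩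
  obtain ⟨c, hc⟩ : ∃ c : ℝ, c = 1 - 1/(k:ℝ) := ⟨_, rfl⟩
  rw [← hC]
  have hc0 : 0 ≤ c := by
    have : 1/(k:ℝ) ≤ 1 := by
      rw [div_le_one hkpos]; exact hk1
    linarith
  -- per-step contraction
  have step : ∀ h : ℕ, f (G (h+1)) - C ≤ c * (f (G h) - C) := by
    intro h
    obtain ⟨e, hGe, hbest⟩ := hGstep h
    have hδ : f (G (h+1)) ≤ f (G h) := by
      rw [hGe]; exact hmono _ _ (Multiset.le_cons_self _ _)
    -- key telescoping bound
    have key : ∀ D : Multiset E,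
        f (G h) - f (G h + D) ≤
          (Multiset.card D : ℝ) * ((f (G h) - f (G (h+1))) + ε) := by
      intro D
      induction D using Multiset.induction with
      | empty => simp
      | cons d D' ih =>
        have h1 : f (G h) - f (d ::ₘ G h)
            ≥ f (G h + D') - f (d ::ₘ (G h + D')) - ε :=
          hsuper _ _ d (Multiset.le_add_right (G h) D')
        have h2 : f (G (h+1)) ≤ f (d ::ₘ G h) := by rw [hGe]; exact hbest d
        have h3 : G h + (d ::ₘ D') = d ::ₘ (G h + D') := by
          simp [Multiset.cons_add, Multiset.add_cons]
        rw [h3]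
        have hcard : (Multiset.card (d ::ₘ D') : ℝ)
            = (Multiset.card D' : ℝ) + 1 := by
          simp
        rw [hcard]
        linarith [h1, h2, ih]
    have hk2 : f (G h) - f Dstar ≤ (k:ℝ) * ((f (G h) - f (G (h+1))) + ε) := by
      have h4 : f Dstar ≥ f (G h + Dstar) :=
        hmono _ _ (Multiset.le_add_left Dstar (G h))
      have h5 := key Dstar
      have h6 : (Multiset.card Dstar : ℝ) ≤ (k:ℝ) := by exact_mod_cast hDcard
      have h7 : 0 ≤ (f (G h) - f (G (h+1))) + ε := by linarith
      nlinarith [mul_le_mul_of_nonneg_right h6 h7]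
    have heq : c * (f (G h) - C) = ((k:ℝ) * (f (G h) - C) - (f (G h) - C)) / k := by
      rw [hc]; field_simp
    rw [heq, le_div_iff₀ hkpos]
    rw [hC] at *
    nlinarith [hk2]
  -- iterate
  have iter : ∀ h : ℕ, f (G h) - C ≤ c ^ h * (-C) := by
    intro h
    induction h with
    | zero => simp [hG0, hnorm]
    | succ n ih =>
      calc f (G (n+1)) - C ≤ c * (f (G n) - C) := step n
        _ ≤ c * (c ^ n * (-C)) := mul_le_mul_of_nonneg_left ih hc0
        _ = c ^ (n+1) * (-C) := by ring
    -- final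
  have hfG0 : f (G ℓ) ≤ 0 := by
    have : (0 : Multiset E) ≤ G ℓ := Multiset.zero_le _
    have := hmono 0 (G ℓ) this
    linarith [hnorm ▸ this]
  have hexp1 : Real.exp (-((ℓ:ℝ) / k)) ≤ 1 := by
    apply Real.exp_le_one_iff.mpr
    have : 0 ≤ (ℓ:ℝ)/k := div_nonneg (Nat.cast_nonneg _) hkpos.le
    linarith
  have hpow : c ^ ℓ ≤ Real.exp (-((ℓ:ℝ) / k)) := by
    have h1 : c ≤ Real.exp (-(1/(k:ℝ))) := by
      have := Real.add_one_le_exp (-(1/(k:ℝ)))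
      rw [hc]; linarith
    have h2 : c ^ ℓ ≤ (Real.exp (-(1/(k:ℝ)))) ^ ℓ :=
      pow_le_pow_left₀ hc0 h1 ℓ
    have h3 : (Real.exp (-(1/(k:ℝ)))) ^ ℓ = Real.exp (-((ℓ:ℝ)/k)) := by
      rw [← Real.exp_nat_mul]
      congr 1
      field_simp
    rw [h3] at h2; exact h2
  rcases le_or_gt 0 C with hCpos | hCneg
  · have hrhs : 0 ≤ (1 - Real.exp (-((ℓ:ℝ) / k))) * C := by
      apply mul_nonneg (by linarith) hCpos
    calc f (G ℓ) ≤ 0 := hfG0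
      _ ≤ _ := hrhs
  · have h1 := iter ℓ
    have h2 : c ^ ℓ * (-C) ≤ Real.exp (-((ℓ:ℝ)/k)) * (-C) :=
      mul_le_mul_of_nonneg_right hpow (by linarith)
    have : f (G ℓ) ≤ C + Real.exp (-((ℓ:ℝ)/k)) * (-C) := by linarith
    calc f (G ℓ) ≤ C + Real.exp (-((ℓ:ℝ)/k)) * (-C) := this
      _ = (1 - Real.exp (-((ℓ:ℝ) / k))) * C := by ring
end

section
/- Let f be normalized, monotone decreasing, and α-supermodular with function α(a,b) (depending on the cardinalities of the inner and outer sets). Then the greedy solution G_ℓ satisfies f(G_ℓ) ≤ [1 - ∏_{h=0}^{ℓ-1} (1 - 1/(∑_{s=0}^{k-1} α(h, h+s)^{-1}))] · f(D*), where D* is optimal among multisets of cardinality at most k. -/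
/-- Greedy near-optimality for α(a,b)-supermodular multiset functions (Theorem 1, first bound). -/
theorem greedy_alpha_supermodular_general
    {E : Type*} [Fintype E] [Nonempty E]
    (f : Multiset E → ℝ) (α : ℕ → ℕ → ℝ) (k ℓ : ℕ) (hk : 0 < k)
    (hα_pos : ∀ a b, 0 < α a b) (hα_le : ∀ a b, α a b ≤ 1)
    (hnorm : f 0 = 0)
    (hmono : ∀ S T : Multiset E, S ≤ T → f T ≤ f S)
    (hsuper : ∀ (S T : Multiset E) (u : E), S ≤ T →
      f S - f (u ::ₘ S) ≥ α (Multiset.card S) (Multiset.card T) * (f T - f (u ::ₘ T)))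
    (G : ℕ → Multiset E)
    (hG0 : G 0 = 0)
    (hGstep : ∀ h : ℕ, ∃ e : E, G (h + 1) = e ::ₘ G h ∧
      ∀ u : E, f (e ::ₘ G h) ≤ f (u ::ₘ G h))
    (Dstar : Multiset E)
    (hDcard : Multiset.card Dstar ≤ k)
    (hDopt : ∀ D : Multiset E, Multiset.card D ≤ k → f Dstar ≤ f D) :
    f (G ℓ) ≤
      (1 - ∏ h ∈ Finset.range ℓ,
        (1 - 1 / (∑ s ∈ Finset.range k, (α h (h + s))⁻¹))) * f Dstar := by
  set σ : ℕ → ℝ := fun h => ∑ s ∈ Finset.range k, (α h (h + s))⁻¹ with hσdef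
  have hcard : ∀ h, Multiset.card (G h) = h := by
    intro h
    induction h with
    | zero => simp [hG0]
    | succ h ih => obtain ⟨e, he, _⟩ := hGstep h; simp [he, ih]
  have hΔ : ∀ h, 0 ≤ f (G h) - f (G (h + 1)) := by
    intro h
    obtain ⟨e, he, _⟩ := hGstep h
    rw [he]
    have := hmono (G h) (e ::ₘ G h) (Multiset.le_cons_self _ _)
    linarith
  -- each inverse α term is ≥ 1
  have hinv : ∀ a b, (1 : ℝ) ≤ (α a b)⁻¹ := by
    intro a b
    rw [le_inv_comm₀ one_pos (hα_pos a b)]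
    simpa using hα_le a b
  have hσ1 : ∀ h, (1 : ℝ) ≤ σ h := by
    intro h
    calc (1 : ℝ) ≤ (k : ℝ) := by exact_mod_cast hk
    _ = ∑ s ∈ Finset.range k, (1 : ℝ) := by simp
    _ ≤ σ h := Finset.sum_le_sum fun s _ => hinv h (h + s)
  have hσpos : ∀ h, (0 : ℝ) < σ h := fun h => lt_of_lt_of_le one_pos (hσ1 h)
  -- key telescoping bound
  have key : ∀ (h : ℕ) (D : Multiset E),
      f (G h) - f (G h + D) ≤
        (∑ s ∈ Finset.range (Multiset.card D), (α h (h + s))⁻¹) *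
          (f (G h) - f (G (h + 1))) := by
    intro h D
    induction D using Multiset.induction with
    | empty => simp
    | cons u D ih =>
      obtain ⟨e, he, hbest⟩ := hGstep h
      have hsub : G h ≤ G h + D := Multiset.le_add_right _ _
      have h1 := hsuper (G h) (G h + D) u hsub
      rw [hcard h, Multiset.card_add, hcard h] at h1
      have hα := hα_pos h (h + Multiset.card D)
      have hstep : f (G h) - f (u ::ₘ G h) ≤ f (G h) - f (G (h + 1)) := by
        rw [he]; have := hbest u; linarith
      -- bound the new bracket
      have h2 : f (G h + D) - f (u ::ₘ (G h + D)) ≤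
          (α h (h + Multiset.card D))⁻¹ * (f (G h) - f (G (h + 1))) := by
        rw [inv_mul_eq_div, le_div_iff₀ hα]
        nlinarith [h1, hstep, hα]
      have hrw : G h + (u ::ₘ D) = u ::ₘ (G h + D) := by
        rw [Multiset.add_cons]
      have hexp : (∑ s ∈ Finset.range (Multiset.card (u ::ₘ D)), (α h (h + s))⁻¹) *
          (f (G h) - f (G (h + 1)))
          = (∑ s ∈ Finset.range (Multiset.card D), (α h (h + s))⁻¹) *
              (f (G h) - f (G (h + 1)))
            + (α h (h + Multiset.card D))⁻¹ * (f (G h) - f (G (h + 1))) := by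
        rw [Multiset.card_cons, Finset.sum_range_succ]; ring
      rw [hrw, hexp]
      linarith
  -- per-step bound against Dstar
  have step : ∀ h, f (G h) - f Dstar ≤ σ h * (f (G h) - f (G (h + 1))) := by
    intro h
    have h1 := key h Dstar
    have h2 : f (G h + Dstar) ≤ f Dstar :=
      hmono Dstar (G h + Dstar) (Multiset.le_add_left _ _)
    have h3 : (∑ s ∈ Finset.range (Multiset.card Dstar), (α h (h + s))⁻¹) ≤ σ h := by
      apply Finset.sum_le_sum_of_subset_of_nonneg
      · exact Finset.range_subset_range.mpr hDcard
      · intro i _ _; exact le_of_lt (inv_pos.mpr (hα_pos _ _))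
    have h4 := mul_le_mul_of_nonneg_right h3 (hΔ h)
    linarith
  -- main induction
  have main : ∀ n, f (G n) - f Dstar ≤
      (∏ h ∈ Finset.range n, (1 - 1 / σ h)) * (0 - f Dstar) := by
    intro n
    induction n with
    | zero => simp [hG0, hnorm]
    | succ n ih =>
      have hs := step n
      have hσn := hσpos n
      have hfac : (0 : ℝ) ≤ 1 - 1 / σ n := by
        have : 1 / σ n ≤ 1 := by
          rw [div_le_one hσn]; exact hσ1 n
        linarith
      have hnext : f (G (n + 1)) - f Dstar ≤ (1 - 1 / σ n) * (f (G n) - f Dstar) := by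
        have hdiv : (f (G n) - f Dstar) / σ n ≤ f (G n) - f (G (n + 1)) := by
          rw [div_le_iff₀ hσn]; nlinarith [hs]
        have : (1 - 1 / σ n) * (f (G n) - f Dstar)
            = (f (G n) - f Dstar) - (f (G n) - f Dstar) / σ n := by
          field_simp
        linarith
      calc f (G (n + 1)) - f Dstar ≤ (1 - 1 / σ n) * (f (G n) - f Dstar) := hnext
      _ ≤ (1 - 1 / σ n) * ((∏ h ∈ Finset.range n, (1 - 1 / σ h)) * (0 - f Dstar)) :=
        mul_le_mul_of_nonneg_left ih hfac
      _ = (∏ h ∈ Finset.range (n + 1), (1 - 1 / σ h)) * (0 - f Dstar) := by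
        rw [Finset.prod_range_succ]; ring
  have := main ℓ
  nlinarith [this]
end

section
/- Define f(D) = λ_max[H (R_θ^{-1} + ∑_{e∈D} M_e)^{-1} H^T] on finite multisets D of E. Then f is ε-supermodular with ε(a,b) ≤ (b-a)·σ_max(H)^2·λ_max(R_θ)^2·ℓ_max: for all multisets A ⊆ B with |A| = a, |B| = b and all u ∈ E, f(A) - f(A∪{u}) ≥ f(B) - f(B∪{u}) - (b-a)·σ_max(H)^2·λ_max(R_θ)^2·ℓ_max. -/
open Matrix

/-- Maximum eigenvalue of a real symmetric matrix (0 if not Hermitian). -/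
noncomputable def lmax {n : ℕ} (A : Matrix (Fin n) (Fin n) ℝ) : ℝ :=
  if h : A.IsHermitian then ⨆ i, h.eigenvalues i else 0

/-! Adding a design point `u` to `D` adds `M u ⪰ 0` to `Y D`. By antitonicity of the matrix
inverse the marginal gain `f D - f (u ::ₘ D)` is nonnegative, and since
`Y⁻¹ - (Y + M)⁻¹ ⪯ Y⁻¹ M Y⁻¹ ⪯ λ_max(M) Y⁻² ⪯ λ_max(M) λ_max(R_θ)² I` (because `Y ⪰ R_θ⁻¹`),
it is at most `C = σ_max(H)² λ_max(R_θ)² ℓ_max`. Two gains in `[0, C]` differ by at most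
`C ≤ (b - a) C` when `A < B`. -/

open scoped MatrixOrder ComplexOrder

namespace Matrix

variable {𝕜 n m : Type*} [RCLike 𝕜] [Fintype n] [Fintype m]

theorem mul_mul_conjTranspose_le_mul_mul_conjTranspose {A B : Matrix n n 𝕜} (h : A ≤ B)
    (C : Matrix m n 𝕜) : C * A * Cᴴ ≤ C * B * Cᴴ := by
  rw [le_iff, ← Matrix.sub_mul, ← Matrix.mul_sub]
  exact (le_iff.mp h).mul_mul_conjTranspose_same C

variable [DecidableEq n]

theorem IsHermitian.le_smul_one_iff {A : Matrix n n 𝕜} (hA : A.IsHermitian) {c : ℝ} :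
    A ≤ c • 1 ↔ ∀ i, hA.eigenvalues i ≤ c := by
  rw [← Algebra.algebraMap_eq_smul_one, le_algebraMap_iff_spectrum_le hA.isSelfAdjoint,
    hA.spectrum_real_eq_range_eigenvalues, Set.forall_mem_range]

theorem mul_self_le_smul_one {X : Matrix n n 𝕜} (hX : 0 ≤ X) {r : ℝ} (h : X ≤ r • 1) :
    X * X ≤ r ^ 2 • 1 := by
  rw [← Algebra.algebraMap_eq_smul_one] at h ⊢
  rw [le_algebraMap_iff_spectrum_le] at h
  rw [← cfc_id' ℝ X, ← cfc_mul ..]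
  refine cfc_le_algebraMap _ _ _ fun x hx => ?_
  have hx₀ : 0 ≤ x := spectrum_nonneg_of_nonneg hX hx
  have hxr : x ≤ r := h x hx
  nlinarith

namespace PosDef

variable {A N : Matrix n n 𝕜} (hA : A.PosDef) (hN : N.PosSemidef)
include hA hN

theorem inv_sub_inv_add_eq :
    A⁻¹ - (A + N)⁻¹ = A⁻¹ * N * (A + N)⁻¹ ∧ A⁻¹ - (A + N)⁻¹ = (A + N)⁻¹ * N * A⁻¹ := by
  have hAu : IsUnit A := hA.isUnit
  have hBu : IsUnit (A + N) := (hA.add_posSemidef hN).isUnit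
  refine ⟨by rw [inv_sub_inv (iff_of_true hAu hBu), add_sub_cancel_left], ?_⟩
  rw [← neg_sub, inv_sub_inv (iff_of_true hBu hAu), sub_add_cancel_left, Matrix.mul_neg,
    Matrix.neg_mul, neg_neg]

theorem inv_add_le_inv : (A + N)⁻¹ ≤ A⁻¹ := by
  obtain ⟨h₁, h₂⟩ := hA.inv_sub_inv_add_eq hN
  have hB := (hA.add_posSemidef hN).inv
  rw [le_iff]
  have : A⁻¹ - (A + N)⁻¹ =
      ((A + N)⁻¹)ᴴ * N * (A + N)⁻¹ + (N * (A + N)⁻¹)ᴴ * A⁻¹ * (N * (A + N)⁻¹) := by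
    rw [conjTranspose_mul, hB.isHermitian.eq, hN.isHermitian.eq]
    nth_rw 1 [h₂, ← add_sub_cancel (A + N)⁻¹ A⁻¹, h₁]
    simp only [Matrix.mul_add, Matrix.mul_assoc]
  rw [this]
  exact (hN.conjTranspose_mul_mul_same _).add (hA.inv.posSemidef.conjTranspose_mul_mul_same _)

theorem inv_sub_inv_add_le : A⁻¹ - (A + N)⁻¹ ≤ A⁻¹ * N * A⁻¹ := by
  obtain ⟨h₁, h₂⟩ := hA.inv_sub_inv_add_eq hN
  rw [le_iff]
  have : A⁻¹ * N * A⁻¹ - (A⁻¹ - (A + N)⁻¹) = (N * A⁻¹)ᴴ * (A + N)⁻¹ * (N * A⁻¹) := by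
    rw [conjTranspose_mul, hA.inv.isHermitian.eq, hN.isHermitian.eq, h₁, ← Matrix.mul_sub, h₂]
    simp only [Matrix.mul_assoc]
  rw [this]
  exact (hA.add_posSemidef hN).inv.posSemidef.conjTranspose_mul_mul_same _

end PosDef

end Matrix

section lmax

variable {n : ℕ} {A B : Matrix (Fin n) (Fin n) ℝ}

theorem le_lmax_smul_one (hA : A.IsHermitian) : A ≤ lmax A • 1 := by
  refine hA.le_smul_one_iff.mpr fun i => ?_
  rw [lmax, dif_pos hA]
  exact le_ciSup (Set.finite_range _).bddAbove i

theorem lmax_le_of_le_smul_one (hA : A.IsHermitian) {c : ℝ} (hc : 0 ≤ c) (h : A ≤ c • 1) :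
    lmax A ≤ c := by
  rw [lmax, dif_pos hA]
  exact Real.iSup_le (hA.le_smul_one_iff.mp h) hc

theorem lmax_nonneg (hA : A.PosSemidef) : 0 ≤ lmax A := by
  rw [lmax, dif_pos hA.isHermitian]
  exact Real.iSup_nonneg hA.eigenvalues_nonneg

theorem lmax_le_lmax (hA : A.PosSemidef) (h : A ≤ B) : lmax A ≤ lmax B := by
  have hB : B.PosSemidef := (hA.nonneg.trans h).posSemidef
  exact lmax_le_of_le_smul_one hA.isHermitian (lmax_nonneg hB)
    (h.trans (le_lmax_smul_one hB.isHermitian))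

end lmax

section InverseCongruence

variable {p m : ℕ} {A N : Matrix (Fin p) (Fin p) ℝ}

theorem lmax_mul_inv_add_mul_transpose_le (hA : A.PosDef) (hN : N.PosSemidef)
    (H : Matrix (Fin m) (Fin p) ℝ) : lmax (H * (A + N)⁻¹ * Hᵀ) ≤ lmax (H * A⁻¹ * Hᵀ) := by
  rw [← conjTranspose_eq_transpose_of_trivial]
  exact lmax_le_lmax ((hA.add_posSemidef hN).inv.posSemidef.mul_mul_conjTranspose_same H)
    (mul_mul_conjTranspose_le_mul_mul_conjTranspose (hA.inv_add_le_inv hN) H)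

theorem lmax_mul_inv_mul_transpose_le (hA : A.PosDef) (hN : N.PosSemidef) {r : ℝ}
    (hr : A⁻¹ ≤ r • 1) (H : Matrix (Fin m) (Fin p) ℝ) :
    lmax (H * A⁻¹ * Hᵀ) ≤ lmax (H * (A + N)⁻¹ * Hᵀ) + lmax (H * Hᵀ) * r ^ 2 * lmax N := by
  rw [← conjTranspose_eq_transpose_of_trivial]
  set ℓ := lmax N
  set B := (A + N)⁻¹
  have hℓ : 0 ≤ ℓ := lmax_nonneg hN
  have hHBH : (H * B * Hᴴ).PosSemidef :=
    (hA.add_posSemidef hN).inv.posSemidef.mul_mul_conjTranspose_same H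
  have hHH : (H * Hᴴ).PosSemidef := posSemidef_self_mul_conjTranspose H
  have hdiff : A⁻¹ ≤ B + (ℓ * r ^ 2) • 1 := calc
    A⁻¹ = B + (A⁻¹ - B) := (add_sub_cancel B A⁻¹).symm
    _ ≤ B + A⁻¹ * N * A⁻¹ := by grw [hA.inv_sub_inv_add_le hN]
    _ ≤ B + A⁻¹ * (ℓ • 1) * A⁻¹ := by
      have := mul_mul_conjTranspose_le_mul_mul_conjTranspose (le_lmax_smul_one hN.isHermitian) A⁻¹
      rw [hA.inv.isHermitian.eq] at this
      grw [this]
    _ = B + ℓ • (A⁻¹ * A⁻¹) := by simp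
    _ ≤ B + ℓ • (r ^ 2 • 1) := by
      grw [mul_self_le_smul_one hA.inv.posSemidef.nonneg hr]
    _ = B + (ℓ * r ^ 2) • 1 := by rw [smul_smul]
  have : H * A⁻¹ * Hᴴ ≤ (lmax (H * B * Hᴴ) + lmax (H * Hᴴ) * r ^ 2 * ℓ) • 1 := calc
    H * A⁻¹ * Hᴴ ≤ H * (B + (ℓ * r ^ 2) • 1) * Hᴴ :=
      mul_mul_conjTranspose_le_mul_mul_conjTranspose hdiff H
    _ = H * B * Hᴴ + (ℓ * r ^ 2) • (H * Hᴴ) := by simp [Matrix.mul_add, Matrix.add_mul]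
    _ ≤ lmax (H * B * Hᴴ) • 1 + (ℓ * r ^ 2) • (lmax (H * Hᴴ) • 1) := by
      grw [le_lmax_smul_one hHBH.isHermitian, le_lmax_smul_one hHH.isHermitian]
    _ = _ := by rw [smul_smul, ← add_smul]; ring_nf
  exact lmax_le_of_le_smul_one (hA.inv.posSemidef.mul_mul_conjTranspose_same H).isHermitian
    (add_nonneg (lmax_nonneg hHBH) (by have := lmax_nonneg hHH; positivity)) this

end InverseCongruence

theorem Multiset.sub_card_sub_card_mul_le_of_mem_Icc {α : Type*} {g : Multiset α → ℝ} {C : ℝ}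
    (hg : ∀ D, g D ∈ Set.Icc 0 C) {S T : Multiset α} (hST : S ≤ T) :
    g T - ((card T : ℝ) - card S) * C ≤ g S := by
  obtain rfl | hlt := hST.eq_or_lt
  · simp
  have hcard : (card S : ℝ) + 1 ≤ card T := by exact_mod_cast Multiset.card_lt_card hlt
  obtain ⟨hS, hC⟩ := hg S
  nlinarith [(hg T).2]

/-- `σ_max(H)²` is written `lmax (H * Hᵀ)`, and `ℓ_max` is `⨆ e, lmax (M e)`. -/
theorem E_optimality_epsilon_supermodular_general
    {E : Type*} [Fintype E] {p m : ℕ}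
    (Rθ : Matrix (Fin p) (Fin p) ℝ) (hRθ : Rθ.PosDef)
    (M : E → Matrix (Fin p) (Fin p) ℝ) (hM : ∀ e, (M e).PosSemidef)
    (H : Matrix (Fin m) (Fin p) ℝ)
    (Y : Multiset E → Matrix (Fin p) (Fin p) ℝ)
    (hY : ∀ D : Multiset E, Y D = Rθ⁻¹ + (D.map M).sum)
    (f : Multiset E → ℝ)
    (hf : ∀ D : Multiset E, f D = lmax (H * (Y D)⁻¹ * Hᵀ)) :
    ∀ (S T : Multiset E) (u : E), S ≤ T →
      f S - f (u ::ₘ S) ≥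
        f T - f (u ::ₘ T) -
          ((Multiset.card T : ℝ) - (Multiset.card S : ℝ)) * lmax (H * Hᵀ) *
            (lmax Rθ) ^ 2 * ⨆ e : E, lmax (M e) := by
  intro S T u hST
  have hsum (D : Multiset E) : (D.map M).sum.PosSemidef :=
    (Multiset.sum_nonneg (Multiset.forall_mem_map_iff.mpr fun e _ => (hM e).nonneg)).posSemidef
  have hYpd (D : Multiset E) : (Y D).PosDef := hY D ▸ hRθ.inv.add_posSemidef (hsum D)
  have hYinv (D : Multiset E) : (Y D)⁻¹ ≤ lmax Rθ • 1 := by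
    have := hRθ.inv.inv_add_le_inv (hsum D)
    rw [nonsing_inv_nonsing_inv _ hRθ.det_pos.ne'.isUnit] at this
    exact (hY D ▸ this).trans (le_lmax_smul_one hRθ.isHermitian)
  have hYcons (D : Multiset E) : Y (u ::ₘ D) = Y D + M u := by
    rw [hY, hY, Multiset.map_cons, Multiset.sum_cons, add_left_comm, add_comm (M u)]
  have hℓ : lmax (M u) ≤ ⨆ e, lmax (M e) :=
    le_ciSup (f := fun e => lmax (M e)) (Set.finite_range _).bddAbove u
  have hgain (D : Multiset E) : f D - f (u ::ₘ D) ∈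
      Set.Icc 0 (lmax (H * Hᵀ) * lmax Rθ ^ 2 * ⨆ e, lmax (M e)) := by
    rw [hf, hf, hYcons]
    have hHH := lmax_nonneg (H.posSemidef_self_mul_conjTranspose)
    rw [conjTranspose_eq_transpose_of_trivial] at hHH
    refine ⟨sub_nonneg.mpr (lmax_mul_inv_add_mul_transpose_le (hYpd D) (hM u) H), ?_⟩
    have := lmax_mul_inv_mul_transpose_le (hYpd D) (hM u) (hYinv D) H
    have := mul_le_mul_of_nonneg_left hℓ (by positivity : 0 ≤ lmax (H * Hᵀ) * lmax Rθ ^ 2)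
    linarith
  have := Multiset.sub_card_sub_card_mul_le_of_mem_Icc hgain hST
  linarith

/-- Theorem 4: the E-optimality objective is ε-supermodular with
`ε(a,b) ≤ (b-a) σ_max(H)² λ_max(R_θ)² ℓ_max`, where `σ_max(H)² = λ_max(HHᵀ)`
and `ℓ_max = max_{e∈E} λ_max(M_e)`. -/
theorem E_optimality_epsilon_supermodular
    {E : Type*} [Fintype E] [Nonempty E] {p m : ℕ}
    (Rθ : Matrix (Fin p) (Fin p) ℝ) (hRθ : Rθ.PosDef)
    (M : E → Matrix (Fin p) (Fin p) ℝ) (hM : ∀ e, (M e).PosSemidef)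
    (H : Matrix (Fin m) (Fin p) ℝ)
    (Y : Multiset E → Matrix (Fin p) (Fin p) ℝ)
    (hY : ∀ D : Multiset E, Y D = Rθ⁻¹ + (D.map M).sum)
    (f : Multiset E → ℝ)
    (hf : ∀ D : Multiset E, f D = lmax (H * (Y D)⁻¹ * Hᵀ)) :
    ∀ (S T : Multiset E) (u : E), S ≤ T →
      f S - f (u ::ₘ S) ≥
        f T - f (u ::ₘ T) -
          ((Multiset.card T : ℝ) - (Multiset.card S : ℝ)) * lmax (H * Hᵀ) *
            (lmax Rθ) ^ 2 * ⨆ e : E, lmax (M e) :=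
  E_optimality_epsilon_supermodular_general Rθ hRθ M hM H Y hY f hf
end

section
/- For any matrices L, L* of size m×n, H of size m×p, Ã of size n×p, R_θ ≻ 0 (p×p), R̃ ≻ 0 (n×n), with L* = H(R_θ^{-1} + Ã^T R̃^{-1} Ã)^{-1} Ã^T R̃^{-1}, the identity (H - LÃ)R_θ(H - LÃ)^T + L R̃ L^T = (H - L*Ã)R_θ(H - L*Ã)^T + L* R̃ (L*)^T + (L - L*)(Ã R_θ Ã^T + R̃)(L - L*)^T holds; in particular the left-hand side is minimized over L in the PSD order at L = L*. -/
open Matrix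

/-- Completion-of-squares identity for the Bayesian linear estimator:
for `L* = H(R_θ⁻¹ + Ãᵀ R̃⁻¹ Ã)⁻¹ Ãᵀ R̃⁻¹`,
`(H - LÃ)R_θ(H - LÃ)ᵀ + L R̃ Lᵀ
  = (H - L*Ã)R_θ(H - L*Ã)ᵀ + L* R̃ (L*)ᵀ + (L - L*)(Ã R_θ Ãᵀ + R̃)(L - L*)ᵀ`,
so the left-hand side is minimized over `L` in the Loewner order at `L = L*`. -/
theorem completion_of_squares
    {m p n : ℕ}
    (H : Matrix (Fin m) (Fin p) ℝ)
    (Atil : Matrix (Fin n) (Fin p) ℝ)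
    (Rθ : Matrix (Fin p) (Fin p) ℝ) (hRθ : Rθ.PosDef)
    (Rtil : Matrix (Fin n) (Fin n) ℝ) (hRtil : Rtil.PosDef)
    (Lstar : Matrix (Fin m) (Fin n) ℝ)
    (hLstar : Lstar = H * (Rθ⁻¹ + Atilᵀ * Rtil⁻¹ * Atil)⁻¹ * Atilᵀ * Rtil⁻¹) :
    (∀ L : Matrix (Fin m) (Fin n) ℝ,
      (H - L * Atil) * Rθ * (H - L * Atil)ᵀ + L * Rtil * Lᵀ =
        (H - Lstar * Atil) * Rθ * (H - Lstar * Atil)ᵀ + Lstar * Rtil * Lstarᵀ +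
          (L - Lstar) * (Atil * Rθ * Atilᵀ + Rtil) * (L - Lstar)ᵀ) ∧
    (∀ L : Matrix (Fin m) (Fin n) ℝ,
      ((H - L * Atil) * Rθ * (H - L * Atil)ᵀ + L * Rtil * Lᵀ -
        ((H - Lstar * Atil) * Rθ * (H - Lstar * Atil)ᵀ +
          Lstar * Rtil * Lstarᵀ)).PosSemidef) := by
  have hRθT : Rθᵀ = Rθ := hRθ.isHermitian.eq
  have hRtilT : Rtilᵀ = Rtil := hRtil.isHermitian.eq
  set S : Matrix (Fin p) (Fin p) ℝ := Rθ⁻¹ + Atilᵀ * Rtil⁻¹ * Atil with hS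
  have hconj : (Atilᵀ * Rtil⁻¹ * Atil).PosSemidef := by
    have := (hRtil.inv.posSemidef).conjTranspose_mul_mul_same Atil
    simpa using this
  have hSpd : S.PosDef := hRθ.inv.add_posSemidef hconj
  have hSinv : S⁻¹ * S = 1 :=
    Matrix.nonsing_inv_mul S (Matrix.isUnit_iff_isUnit_det S |>.mp hSpd.isUnit)
  have hRtilinv : Rtil⁻¹ * Rtil = 1 :=
    Matrix.nonsing_inv_mul Rtil (Matrix.isUnit_iff_isUnit_det Rtil |>.mp hRtil.isUnit)
  have hRθinv : Rθ⁻¹ * Rθ = 1 :=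
    Matrix.nonsing_inv_mul Rθ (Matrix.isUnit_iff_isUnit_det Rθ |>.mp hRθ.isUnit)
  -- the key normal-equations identity
  have step : Atilᵀ * Rtil⁻¹ * (Atil * Rθ * Atilᵀ + Rtil) = S * (Rθ * Atilᵀ) := by
    calc Atilᵀ * Rtil⁻¹ * (Atil * Rθ * Atilᵀ + Rtil)
        = Atilᵀ * Rtil⁻¹ * (Atil * Rθ * Atilᵀ) + Atilᵀ * Rtil⁻¹ * Rtil := by
          rw [Matrix.mul_add]
      _ = Atilᵀ * Rtil⁻¹ * Atil * (Rθ * Atilᵀ) + Atilᵀ * (Rtil⁻¹ * Rtil) := by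
          simp only [Matrix.mul_assoc]
      _ = Atilᵀ * Rtil⁻¹ * Atil * (Rθ * Atilᵀ) + Rθ⁻¹ * (Rθ * Atilᵀ) := by
          rw [hRtilinv, Matrix.mul_one, ← Matrix.mul_assoc Rθ⁻¹ Rθ Atilᵀ, hRθinv,
            Matrix.one_mul]
      _ = (Atilᵀ * Rtil⁻¹ * Atil + Rθ⁻¹) * (Rθ * Atilᵀ) := by rw [Matrix.add_mul]
      _ = S * (Rθ * Atilᵀ) := by rw [hS, add_comm]
  have key : Lstar * (Atil * Rθ * Atilᵀ + Rtil) = H * Rθ * Atilᵀ := by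
    rw [hLstar]
    calc H * S⁻¹ * Atilᵀ * Rtil⁻¹ * (Atil * Rθ * Atilᵀ + Rtil)
        = H * S⁻¹ * (Atilᵀ * Rtil⁻¹ * (Atil * Rθ * Atilᵀ + Rtil)) := by
          simp only [Matrix.mul_assoc]
      _ = H * S⁻¹ * (S * (Rθ * Atilᵀ)) := by rw [step]
      _ = H * (S⁻¹ * S * (Rθ * Atilᵀ)) := by simp only [Matrix.mul_assoc]
      _ = H * Rθ * Atilᵀ := by rw [hSinv, Matrix.one_mul, Matrix.mul_assoc]
  have keyT : (Atil * Rθ * Atilᵀ + Rtil) * Lstarᵀ = Atil * Rθ * Hᵀ := by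
    have h := congrArg Matrix.transpose key
    simp only [Matrix.transpose_mul, Matrix.transpose_add, Matrix.transpose_transpose,
      hRθT, hRtilT] at h
    simp only [Matrix.mul_assoc] at h ⊢
    exact h
  -- the completion-of-squares identity
  have main : ∀ L : Matrix (Fin m) (Fin n) ℝ,
      (H - L * Atil) * Rθ * (H - L * Atil)ᵀ + L * Rtil * Lᵀ =
        (H - Lstar * Atil) * Rθ * (H - Lstar * Atil)ᵀ + Lstar * Rtil * Lstarᵀ +
          (L - Lstar) * (Atil * Rθ * Atilᵀ + Rtil) * (L - Lstar)ᵀ := by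
    intro L
    have k1 : Lstar * (Atil * (Rθ * (Atilᵀ * Lᵀ))) + Lstar * (Rtil * Lᵀ)
        = H * (Rθ * (Atilᵀ * Lᵀ)) := by
      have h := congrArg (fun X => X * Lᵀ) key
      simp only [Matrix.add_mul, Matrix.mul_add, Matrix.mul_assoc] at h
      exact h
    have k2 : L * (Atil * (Rθ * (Atilᵀ * Lstarᵀ))) + L * (Rtil * Lstarᵀ)
        = L * (Atil * (Rθ * Hᵀ)) := by
      have h := congrArg (fun X => L * X) keyT
      simp only [Matrix.add_mul, Matrix.mul_add, Matrix.mul_assoc] at h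
      exact h
    have k3 : Lstar * (Atil * (Rθ * (Atilᵀ * Lstarᵀ))) + Lstar * (Rtil * Lstarᵀ)
        = H * (Rθ * (Atilᵀ * Lstarᵀ)) := by
      have h := congrArg (fun X => X * Lstarᵀ) key
      simp only [Matrix.add_mul, Matrix.mul_add, Matrix.mul_assoc] at h
      exact h
    have k4 : Lstar * (Atil * (Rθ * Hᵀ)) = H * (Rθ * (Atilᵀ * Lstarᵀ)) := by
      calc Lstar * (Atil * (Rθ * Hᵀ))
          = Lstar * (Atil * Rθ * Hᵀ) := by simp only [Matrix.mul_assoc]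
        _ = Lstar * ((Atil * Rθ * Atilᵀ + Rtil) * Lstarᵀ) := by rw [keyT]
        _ = Lstar * (Atil * Rθ * Atilᵀ + Rtil) * Lstarᵀ := (Matrix.mul_assoc Lstar _ Lstarᵀ).symm
        _ = H * Rθ * Atilᵀ * Lstarᵀ := by rw [key]
        _ = H * (Rθ * (Atilᵀ * Lstarᵀ)) := by simp only [Matrix.mul_assoc]
    have comb :
        ((H - Lstar * Atil) * Rθ * (H - Lstar * Atil)ᵀ + Lstar * Rtil * Lstarᵀ +
          (L - Lstar) * (Atil * Rθ * Atilᵀ + Rtil) * (L - Lstar)ᵀ) -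
        ((H - L * Atil) * Rθ * (H - L * Atil)ᵀ + L * Rtil * Lᵀ) =
        ((Lstar * (Atil * (Rθ * (Atilᵀ * Lstarᵀ))) + Lstar * (Rtil * Lstarᵀ)) -
            H * (Rθ * (Atilᵀ * Lstarᵀ))) +
        ((Lstar * (Atil * (Rθ * (Atilᵀ * Lstarᵀ))) + Lstar * (Rtil * Lstarᵀ)) -
            H * (Rθ * (Atilᵀ * Lstarᵀ))) -
        ((Lstar * (Atil * (Rθ * (Atilᵀ * Lᵀ))) + Lstar * (Rtil * Lᵀ)) -
            H * (Rθ * (Atilᵀ * Lᵀ))) -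
        ((L * (Atil * (Rθ * (Atilᵀ * Lstarᵀ))) + L * (Rtil * Lstarᵀ)) -
            L * (Atil * (Rθ * Hᵀ))) -
        (Lstar * (Atil * (Rθ * Hᵀ)) - H * (Rθ * (Atilᵀ * Lstarᵀ))) := by
      simp only [Matrix.transpose_sub, Matrix.transpose_mul, Matrix.transpose_add,
        Matrix.transpose_transpose, hRθT, hRtilT, Matrix.sub_mul, Matrix.mul_sub,
        Matrix.add_mul, Matrix.mul_add, Matrix.mul_assoc]
      abel
    rw [k1, k2, k3, k4] at comb
    simp only [sub_self, add_zero, zero_add, zero_sub, sub_zero, neg_zero] at comb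
    exact (sub_eq_zero.mp comb).symm
  refine ⟨main, ?_⟩
  intro L
  have hMpsd : (Atil * Rθ * Atilᵀ + Rtil).PosSemidef := by
    have h1 : (Atil * Rθ * Atilᵀ).PosSemidef := by
      have := hRθ.posSemidef.mul_mul_conjTranspose_same Atil
      simpa using this
    exact h1.add hRtil.posSemidef
  have heq : (H - L * Atil) * Rθ * (H - L * Atil)ᵀ + L * Rtil * Lᵀ -
        ((H - Lstar * Atil) * Rθ * (H - Lstar * Atil)ᵀ + Lstar * Rtil * Lstarᵀ) =
      (L - Lstar) * (Atil * Rθ * Atilᵀ + Rtil) * (L - Lstar)ᵀ := by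
    rw [main L]; abel
  rw [heq]
  have := hMpsd.mul_mul_conjTranspose_same (L - Lstar)
  simpa using this
end
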